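/- arXiv:2506.08312 — 4 statements merged into one kernel-verified Lean document; each statement's English description precedes it below -/
import Mathlib

section
/- Let (Ω,ρ) be a metric space, S ∈ Ω^n, V ∈ Ω^m, and μ* = NN(S, V, ρ). Then μ* minimizes, over all probability vectors μ ∈ Δ_m, the 1-Wasserstein distance W1(μ_S, Σ_j μ[j]·δ_{V[j]}); moreover, the minimum value equals (1/n)·Σ_{i=1}^n min_{j∈[m]} ρ(S[i], V[j]). -/
open MeasureTheory Real Set

noncomputable section

/-- 1-Wasserstein distance between finitely supported measures given by points and weights. -/
def W1D {Ω : Type*} [PseudoMetricSpace Ω] {n m : ℕ}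
    (x : Fin n → Ω) (a : Fin n → ℝ) (y : Fin m → Ω) (b : Fin m → ℝ) : ℝ :=
  sInf {c | ∃ pl : Fin n → Fin m → ℝ, (∀ i j, 0 ≤ pl i j) ∧ (∀ i, ∑ j, pl i j = a i) ∧
    (∀ j, ∑ i, pl i j = b j) ∧ c = ∑ i, ∑ j, pl i j * dist (x i) (y j)}

/-- j is the smallest-index nearest neighbour of S i among V. -/
def isNN {Ω : Type*} [PseudoMetricSpace Ω] {n m : ℕ}
    (S : Fin n → Ω) (V : Fin m → Ω) (i : Fin n) (j : Fin m) : Prop :=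
  (∀ l, dist (S i) (V j) ≤ dist (S i) (V l)) ∧ ∀ l, l < j → dist (S i) (V j) < dist (S i) (V l)

/-- Nearest neighbour histogram NN(S, V, ρ). -/
def nnHist {Ω : Type*} [PseudoMetricSpace Ω] {n m : ℕ}
    (S : Fin n → Ω) (V : Fin m → Ω) (j : Fin m) : ℝ :=
  (Nat.card {i : Fin n // isNN S V i j} : ℝ) / n

/-- probability vector in the simplex Δ_m -/
def probVec {m : ℕ} (b : Fin m → ℝ) : Prop := (∀ j, 0 ≤ b j) ∧ ∑ j, b j = 1

lemma nn_unique {Ω : Type*} [PseudoMetricSpace Ω] {n m : ℕ}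
    {S : Fin n → Ω} {V : Fin m → Ω} {i : Fin n} {j k : Fin m}
    (hj : isNN S V i j) (hk : isNN S V i k) : j = k := by
  by_contra h
  rcases lt_or_gt_of_ne h with hlt | hlt
  · exact absurd (hj.1 k) (not_le.mpr (hk.2 j hlt))
  · exact absurd (hk.1 j) (not_le.mpr (hj.2 k hlt))

lemma exists_nn {Ω : Type*} [PseudoMetricSpace Ω] {n m : ℕ} (hm : 0 < m)
    (S : Fin n → Ω) (V : Fin m → Ω) (i : Fin n) : ∃ j, isNN S V i j := by
  classical
  set T : Finset (Fin m) :=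
    Finset.univ.filter (fun j => ∀ l, dist (S i) (V j) ≤ dist (S i) (V l)) with hT
  have hTne : T.Nonempty := by
    obtain ⟨j0, _, hj0⟩ := Finset.exists_min_image Finset.univ (fun j => dist (S i) (V j))
      (Finset.univ_nonempty_iff.mpr ⟨⟨0, hm⟩⟩)
    exact ⟨j0, by simp [hT]; exact fun l => hj0 l (Finset.mem_univ l)⟩
  have hmin : ∀ l, dist (S i) (V (T.min' hTne)) ≤ dist (S i) (V l) := by
    have := T.min'_mem hTne
    simp only [hT, Finset.mem_filter] at this
    exact this.2
  refine ⟨T.min' hTne, hmin, fun l hl => ?_⟩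
  rcases lt_or_ge (dist (S i) (V (T.min' hTne))) (dist (S i) (V l)) with h | h
  · exact h
  · have heq : dist (S i) (V l) = dist (S i) (V (T.min' hTne)) := le_antisymm h (hmin l)
    have hlT : l ∈ T := by
      simp only [hT, Finset.mem_filter]
      exact ⟨Finset.mem_univ l, fun l' => heq ▸ hmin l'⟩
    exact absurd (T.min'_le l hlT) (not_le.mpr hl)

/-- The nearest-neighbour histogram minimizes the 1-Wasserstein distance to μ_S among all
probability vectors on V, and the minimum equals the average distance to the nearest point. -/
theorem nn_histogram_minimizes_W1
    {Ω : Type*} [MetricSpace Ω] {n m : ℕ} (hn : 0 < n) (hm : 0 < m)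
    (S : Fin n → Ω) (V : Fin m → Ω) :
    (∀ μ : Fin m → ℝ, probVec μ →
      W1D S (fun _ => (n : ℝ)⁻¹) V (nnHist S V) ≤ W1D S (fun _ => (n : ℝ)⁻¹) V μ) ∧
    W1D S (fun _ => (n : ℝ)⁻¹) V (nnHist S V) =
      (n : ℝ)⁻¹ * ∑ i,
        Finset.univ.inf' ⟨⟨0, hm⟩, Finset.mem_univ _⟩ (fun j => dist (S i) (V j)) := by
  classical
  set D : Fin n → ℝ :=
    fun i => Finset.univ.inf' ⟨⟨0, hm⟩, Finset.mem_univ _⟩ (fun j => dist (S i) (V j)) with hD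
  set B : ℝ := (n : ℝ)⁻¹ * ∑ i, D i with hB
  -- nearest-neighbour index
  choose nnIdx hnnIdx using exists_nn hm S V
  have hDval : ∀ i, D i = dist (S i) (V (nnIdx i)) := by
    intro i
    refine le_antisymm (Finset.inf'_le _ (Finset.mem_univ _)) ?_
    exact Finset.le_inf' _ _ fun l _ => (hnnIdx i).1 l
  -- lower bound: every element of every transport set is ≥ B
  have hlow : ∀ (b : Fin m → ℝ) (c : ℝ),
      c ∈ {c | ∃ pl : Fin n → Fin m → ℝ, (∀ i j, 0 ≤ pl i j) ∧
        (∀ i, ∑ j, pl i j = (fun _ => (n : ℝ)⁻¹) i) ∧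
        (∀ j, ∑ i, pl i j = b j) ∧ c = ∑ i, ∑ j, pl i j * dist (S i) (V j)} → B ≤ c := by
    rintro b c ⟨pl, hpos, hrow, _, rfl⟩
    have : B = ∑ i, ∑ j, pl i j * D i := by
      rw [hB, Finset.mul_sum]
      refine Finset.sum_congr rfl fun i _ => ?_
      rw [← Finset.sum_mul, hrow i]
    rw [this]
    refine Finset.sum_le_sum fun i _ => Finset.sum_le_sum fun j _ => ?_
    exact mul_le_mul_of_nonneg_left (Finset.inf'_le _ (Finset.mem_univ j)) (hpos i j)
  -- NN transport plan
  set pl0 : Fin n → Fin m → ℝ := fun i j => if isNN S V i j then (n : ℝ)⁻¹ else 0 with hpl0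
  have hmem : B ∈ {c | ∃ pl : Fin n → Fin m → ℝ, (∀ i j, 0 ≤ pl i j) ∧
      (∀ i, ∑ j, pl i j = (fun _ => (n : ℝ)⁻¹) i) ∧
      (∀ j, ∑ i, pl i j = nnHist S V j) ∧ c = ∑ i, ∑ j, pl i j * dist (S i) (V j)} := by
    refine ⟨pl0, fun i j => by positivity, ?_, ?_, ?_⟩
    · intro i
      rw [Finset.sum_eq_single_of_mem (nnIdx i) (Finset.mem_univ _)
        (fun j _ hj => if_neg (fun h => hj (nn_unique h (hnnIdx i))))]
      exact if_pos (hnnIdx i)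
    · intro j
      have : ∑ i, pl0 i j = ∑ i ∈ Finset.univ.filter (fun i => isNN S V i j), (n : ℝ)⁻¹ := by
        rw [Finset.sum_filter]
      rw [this, Finset.sum_const, nnHist, Nat.card_eq_fintype_card, Fintype.card_subtype]
      simp [div_eq_mul_inv]
    · rw [hB, Finset.mul_sum]
      refine Finset.sum_congr rfl fun i _ => ?_
      rw [Finset.sum_eq_single_of_mem (nnIdx i) (Finset.mem_univ _)
        (fun j _ hj => by
          simp only [hpl0]
          rw [if_neg (fun h => hj (nn_unique h (hnnIdx i))), zero_mul])]
      simp only [hpl0]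
      rw [if_pos (hnnIdx i), hDval i]
  have hbdd : BddBelow {c | ∃ pl : Fin n → Fin m → ℝ, (∀ i j, 0 ≤ pl i j) ∧
      (∀ i, ∑ j, pl i j = (fun _ => (n : ℝ)⁻¹) i) ∧
      (∀ j, ∑ i, pl i j = nnHist S V j) ∧ c = ∑ i, ∑ j, pl i j * dist (S i) (V j)} :=
    ⟨B, fun c hc => hlow _ c hc⟩
  have hval : W1D S (fun _ => (n : ℝ)⁻¹) V (nnHist S V) = B :=
    le_antisymm (csInf_le hbdd hmem) (le_csInf ⟨B, hmem⟩ fun c hc => hlow _ c hc)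
  refine ⟨fun μ hμ => ?_, hval⟩
  rw [hval]
  refine le_csInf ⟨∑ i, ∑ j, ((n : ℝ)⁻¹ * μ j) * dist (S i) (V j),
    (fun i j => (n : ℝ)⁻¹ * μ j), fun i j => mul_nonneg (by positivity) (hμ.1 j), ?_, ?_, rfl⟩
    (fun c hc => hlow μ c hc)
  · intro i
    rw [← Finset.mul_sum, hμ.2, mul_one]
  · intro j
    rw [Finset.sum_const, Finset.card_univ, Fintype.card_fin, nsmul_eq_mul, ← mul_assoc,
      mul_inv_cancel₀ (Nat.cast_ne_zero.mpr hn.ne'), one_mul]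

end
end

section
/- Let (Ω,ρ) be a metric space with finite diameter, V ∈ Ω^m, μ̃ ∈ ℝ^m a signed measure on V, and let μ' ∈ Δ_m be any minimizer over the probability simplex Δ_m of μ ↦ BL(μ̃, μ). Then for every μ̂ ∈ Δ_m and all finitely supported probability measures p, q on Ω: BL(p, q) ≤ BL(p, μ̂) + 2·BL(μ̂, μ̃) + BL(μ', q), where vectors in ℝ^m are identified with the corresponding weighted sums of Dirac masses at the points of V. -/
open MeasureTheory Real Set

noncomputable section

/-- The class of bounded 1-Lipschitz functions on a metric space. -/
def FBL (Ω : Type*) [PseudoMetricSpace Ω] : Set (Ω → ℝ) :=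
  {f | (∀ z, |f z| ≤ Metric.diam (Set.univ : Set Ω)) ∧
       ∀ z1 z2, f z1 - f z2 ≤ dist z1 z2}

/-- Bounded-Lipschitz distance between finitely supported signed measures. -/
def BL2 {Ω : Type*} [PseudoMetricSpace Ω] {n m : ℕ}
    (x : Fin n → Ω) (a : Fin n → ℝ) (y : Fin m → Ω) (b : Fin m → ℝ) : ℝ :=
  ⨆ f : FBL Ω, ((∑ i, a i * (f : Ω → ℝ) (x i)) - ∑ j, b j * (f : Ω → ℝ) (y j))

section Aux

variable {Ω : Type*} [PseudoMetricSpace Ω]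

lemma FBL.zero_mem : (fun _ : Ω => (0 : ℝ)) ∈ FBL Ω :=
  ⟨fun _ => by simpa using Metric.diam_nonneg, fun _ _ => by simpa using dist_nonneg⟩

instance : Nonempty (FBL Ω) := ⟨⟨_, FBL.zero_mem⟩⟩

lemma FBL.neg_mem {f : Ω → ℝ} (hf : f ∈ FBL Ω) : (fun z => -f z) ∈ FBL Ω := by
  obtain ⟨h1, h2⟩ := hf
  refine ⟨fun z => by simpa [abs_neg] using h1 z, fun z1 z2 => ?_⟩
  have h := h2 z2 z1
  have hd : dist z2 z1 = dist z1 z2 := dist_comm _ _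
  show -f z1 - -f z2 ≤ dist z1 z2
  linarith

lemma BL2_bdd {n m : ℕ} (x : Fin n → Ω) (a : Fin n → ℝ) (y : Fin m → Ω) (b : Fin m → ℝ) :
    BddAbove (Set.range fun f : FBL Ω =>
      ((∑ i, a i * (f : Ω → ℝ) (x i)) - ∑ j, b j * (f : Ω → ℝ) (y j))) := by
  set D := Metric.diam (Set.univ : Set Ω)
  refine ⟨(∑ i, |a i|) * D + (∑ j, |b j|) * D, ?_⟩
  rintro r ⟨f, rfl⟩
  have key : ∀ {k : ℕ} (z : Fin k → Ω) (c : Fin k → ℝ),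
      |∑ i, c i * (f : Ω → ℝ) (z i)| ≤ (∑ i, |c i|) * D := by
    intro k z c
    calc |∑ i, c i * (f : Ω → ℝ) (z i)| ≤ ∑ i, |c i * (f : Ω → ℝ) (z i)| :=
          Finset.abs_sum_le_sum_abs _ _
      _ ≤ ∑ i, |c i| * D := by
          refine Finset.sum_le_sum fun i _ => ?_
          rw [abs_mul]
          exact mul_le_mul_of_nonneg_left (f.2.1 (z i)) (abs_nonneg _)
      _ = (∑ i, |c i|) * D := by rw [Finset.sum_mul]
  have h1 := (abs_le.mp (key x a)).2
  have h2 := (abs_le.mp (key y b)).1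
  simp only []
  linarith

lemma BL2_triangle {n m k : ℕ} (x : Fin n → Ω) (a : Fin n → ℝ) (y : Fin m → Ω) (b : Fin m → ℝ)
    (z : Fin k → Ω) (c : Fin k → ℝ) :
    BL2 x a y b ≤ BL2 x a z c + BL2 z c y b := by
  refine ciSup_le fun f => ?_
  have h1 : ((∑ i, a i * (f : Ω → ℝ) (x i)) - ∑ j, c j * (f : Ω → ℝ) (z j)) ≤ BL2 x a z c :=
    le_ciSup (BL2_bdd x a z c) f
  have h2 : ((∑ i, c i * (f : Ω → ℝ) (z i)) - ∑ j, b j * (f : Ω → ℝ) (y j)) ≤ BL2 z c y b :=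
    le_ciSup (BL2_bdd z c y b) f
  linarith

lemma BL2_symm {n m : ℕ} (x : Fin n → Ω) (a : Fin n → ℝ) (y : Fin m → Ω) (b : Fin m → ℝ) :
    BL2 x a y b = BL2 y b x a := by
  have key : ∀ {n m : ℕ} (x : Fin n → Ω) (a : Fin n → ℝ) (y : Fin m → Ω) (b : Fin m → ℝ),
      BL2 x a y b ≤ BL2 y b x a := by
    intro n m x a y b
    refine ciSup_le fun f => ?_
    have h : ((∑ i, b i * (-(f : Ω → ℝ) (y i))) - ∑ j, a j * (-(f : Ω → ℝ) (x j)))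
        ≤ BL2 y b x a :=
      le_ciSup (BL2_bdd y b x a) (⟨fun z => -(f : Ω → ℝ) z, FBL.neg_mem f.2⟩ : FBL Ω)
    simp only [mul_neg, Finset.sum_neg_distrib] at h
    linarith
  exact le_antisymm (key x a y b) (key y b x a)

end Aux

/-- Key chaining inequality for the BL projection step of Private Evolution. -/
theorem BL_projection_triangle
    {Ω : Type*} [MetricSpace Ω] (hbdd : Bornology.IsBounded (Set.univ : Set Ω))
    {m a b : ℕ} (V : Fin m → Ω) (μt : Fin m → ℝ)
    (μ' : Fin m → ℝ)
    (hμ' : probVec μ' ∧ ∀ ν : Fin m → ℝ, probVec ν → BL2 V μt V μ' ≤ BL2 V μt V ν)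
    (μh : Fin m → ℝ) (hμh : probVec μh)
    (x : Fin a → Ω) (p : Fin a → ℝ) (hp : probVec p)
    (y : Fin b → Ω) (q : Fin b → ℝ) (hq : probVec q) :
    BL2 x p y q ≤ BL2 x p V μh + 2 * BL2 V μh V μt + BL2 V μ' y q := by
  have t1 : BL2 x p y q ≤ BL2 x p V μh + BL2 V μh y q := BL2_triangle _ _ _ _ _ _
  have t2 : BL2 V μh y q ≤ BL2 V μh V μt + BL2 V μt y q := BL2_triangle _ _ _ _ _ _
  have t3 : BL2 V μt y q ≤ BL2 V μt V μ' + BL2 V μ' y q := BL2_triangle _ _ _ _ _ _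
  have hmin : BL2 V μt V μ' ≤ BL2 V μt V μh := hμ'.2 μh hμh
  have hs : BL2 V μt V μh = BL2 V μh V μt := BL2_symm _ _ _ _
  linarith

end
end

section
/- Let (Ω,ρ) be a metric space with diam(Ω) ≤ D, V ∈ Ω^m, and μ̃ ∈ ℝ^m with nonnegative entries and ‖μ̃‖₁ > 0. Then BL(μ̃, μ̃/‖μ̃‖₁) ≤ D·|1 − ‖μ̃‖₁|, where μ̃ and μ̃/‖μ̃‖₁ are identified with the measures Σ_i μ̃[i]·δ_{V[i]} and Σ_i (μ̃[i]/‖μ̃‖₁)·δ_{V[i]}. -/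
open MeasureTheory Real Set

noncomputable section

/-- Renormalization error in BL distance: BL(μ̃, μ̃/‖μ̃‖₁) ≤ D·|1 − ‖μ̃‖₁|. -/
theorem BL_renormalization_error
    {Ω : Type*} [MetricSpace Ω] (D : ℝ) (hΩ : Metric.diam (Set.univ : Set Ω) ≤ D)
    {m : ℕ} (V : Fin m → Ω) (μt : Fin m → ℝ) (hpos : ∀ i, 0 ≤ μt i)
    (hsum : 0 < ∑ i, μt i) :
    BL2 V μt V (fun i => μt i / ∑ j, μt j) ≤ D * |1 - ∑ j, μt j| := by
  have hD : 0 ≤ D := le_trans Metric.diam_nonneg hΩ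
  have hRHS : 0 ≤ D * |1 - ∑ j, μt j| := mul_nonneg hD (abs_nonneg _)
  apply Real.iSup_le _ hRHS
  rintro ⟨f, hf1, hf2⟩
  set S := ∑ j, μt j with hS
  have hS0 : S ≠ 0 := ne_of_gt hsum
  have key : ∀ i, μt i * f (V i) - μt i / S * f (V i) ≤ μt i * (|1 - 1 / S| * D) := by
    intro i
    have : μt i * f (V i) - μt i / S * f (V i) = μt i * ((1 - 1 / S) * f (V i)) := by
      ring
    rw [this]
    refine mul_le_mul_of_nonneg_left ?_ (hpos i)
    calc (1 - 1 / S) * f (V i) ≤ |(1 - 1 / S) * f (V i)| := le_abs_self _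
      _ = |1 - 1 / S| * |f (V i)| := abs_mul _ _
      _ ≤ |1 - 1 / S| * D := by
          exact mul_le_mul_of_nonneg_left (le_trans (hf1 _) hΩ) (abs_nonneg _)
  calc (∑ i, μt i * f (V i)) - ∑ i, μt i / S * f (V i)
      = ∑ i, (μt i * f (V i) - μt i / S * f (V i)) := by rw [Finset.sum_sub_distrib]
    _ ≤ ∑ i, μt i * (|1 - 1 / S| * D) := Finset.sum_le_sum fun i _ => key i
    _ = S * (|1 - 1 / S| * D) := by rw [← Finset.sum_mul]
    _ = D * |1 - S| := by
        have : S * |1 - 1 / S| = |1 - S| := by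
          calc S * |1 - 1 / S| = |S| * |1 - 1 / S| := by rw [abs_of_pos hsum]
            _ = |S * (1 - 1 / S)| := (abs_mul _ _).symm
            _ = |S - 1| := by rw [mul_sub, mul_one, mul_one_div, div_self hS0]
            _ = |1 - S| := abs_sub_comm _ _
        rw [← mul_assoc, this, mul_comm]

end
end

section
/- Private Signed Measure Mechanism guarantee: let (Ω,ρ) be a metric space with finite diameter, {Ω_i}_{i∈[m]} a partition of Ω with chosen representatives ω_i ∈ Ω_i, S ∈ Ω^n with counts n_i = |{j ∈ [n] : S[j] ∈ Ω_i}|, ε > 0, δ ∈ (0,1). Let N_1,…,N_m be i.i.d. Gaussian random variables N(0, log(1/δ)/ε²), let μ̃ be the (random) signed measure with μ̃({ω_i}) = (n_i + N_i)/n and no mass elsewhere, let μ̂ be a measurably selected minimizer of BL(μ̃, ·) over probability measures supported on {ω_1,…,ω_m}, and let μ be any finitely supported probability measure on Ω, measurable in the noise, with μ(Ω_i) = μ̂({ω_i}) for all i. Then E[BL(μ_S, μ)] ≤ 2·(max_{i∈[m]} diam(Ω_i) + (m·√(log(1/δ))/(nε))·G_m(F_BL)). -/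
/-!
Let `ν̂` be the histogram of the sample on the representatives (mass `nᵢ / n` at `ωᵢ`), so that
`μ̃ = ν̂ + N / n`. Moving each atom of a probability measure to the representative of its cell costs
at most `D = maxᵢ diam Ωᵢ`, so the triangle inequality along `μ_S, ν̂, μ̃, μ̂, μ` gives
`BL(μ_S, μ) ≤ 2 D + (2 / n) sup_{f ∈ F_BL} |Σᵢ Nᵢ f(ωᵢ)|`; the step `BL(μ̃, μ̂) ≤ BL(μ̃, ν̂)` is the
minimality of `μ̂` against the competitor `ν̂`. Since `N` is `σ = √(log (1/δ)) / ε` times a standard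
Gaussian vector, the expected supremum is at most `σ m G_m(F_BL)`.
-/

open MeasureTheory ProbabilityTheory Real Set

noncomputable section

/-- Gaussian complexity of a function class. -/
def gaussComp (Ω : Type*) [PseudoMetricSpace Ω] (n : ℕ) (F : Set (Ω → ℝ)) : ℝ :=
  ⨆ z : Fin n → Ω, ∫ x : Fin n → ℝ,
    (⨆ f : F, (1 / (n : ℝ)) * |∑ i, x i * (f : Ω → ℝ) (z i)|)
      ∂(Measure.pi fun _ => gaussianReal 0 1)

namespace PSMM

variable {Ω : Type*} [PseudoMetricSpace Ω]

lemma zero_mem_FBL : (fun _ => (0 : ℝ)) ∈ FBL Ω :=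
  ⟨fun _ => by simp [Metric.diam_nonneg], fun _ _ => by simp [dist_nonneg]⟩

instance : Nonempty (FBL Ω) := ⟨⟨_, zero_mem_FBL⟩⟩

lemma abs_sum_mul_le_of_mem_FBL {ι : Type*} [Fintype ι] (z : ι → Ω) (a : ι → ℝ)
    {f : Ω → ℝ} (hf : f ∈ FBL Ω) :
    |∑ i, a i * f (z i)| ≤ (∑ i, |a i|) * Metric.diam (univ : Set Ω) := by
  rw [Finset.sum_mul]
  refine (Finset.abs_sum_le_sum_abs _ _).trans (Finset.sum_le_sum fun i _ => ?_)
  rw [abs_mul]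
  exact mul_le_mul_of_nonneg_left (hf.1 _) (abs_nonneg _)

lemma sum_mul_sub_sum_mul_le_of_mem_FBL {ι : Type*} [Fintype ι] {f : Ω → ℝ} (hf : f ∈ FBL Ω)
    {w : ι → ℝ} (hw : ∀ k, 0 ≤ w k) {u v : ι → Ω} {D : ℝ} (huv : ∀ k, dist (u k) (v k) ≤ D) :
    ∑ k, w k * f (u k) - ∑ k, w k * f (v k) ≤ (∑ k, w k) * D := by
  rw [← Finset.sum_sub_distrib, Finset.sum_mul]
  refine Finset.sum_le_sum fun k _ => ?_
  rw [← mul_sub]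
  exact mul_le_mul_of_nonneg_left ((hf.2 _ _).trans (huv k)) (hw k)

section BL2

variable {k l : ℕ} (x : Fin k → Ω) (a : Fin k → ℝ) (y : Fin l → Ω) (b : Fin l → ℝ)

lemma bddAbove_range_BL2 :
    BddAbove (range fun f : FBL Ω =>
      ∑ i, a i * (f : Ω → ℝ) (x i) - ∑ j, b j * (f : Ω → ℝ) (y j)) := by
  refine ⟨(∑ i, |a i|) * Metric.diam (univ : Set Ω)
    + (∑ j, |b j|) * Metric.diam (univ : Set Ω), ?_⟩
  rintro _ ⟨f, rfl⟩
  have ha := (abs_le.mp (abs_sum_mul_le_of_mem_FBL x a f.2)).2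
  have hb := (abs_le.mp (abs_sum_mul_le_of_mem_FBL y b f.2)).1
  linarith

lemma le_BL2 {f : Ω → ℝ} (hf : f ∈ FBL Ω) :
    ∑ i, a i * f (x i) - ∑ j, b j * f (y j) ≤ BL2 x a y b :=
  le_ciSup (bddAbove_range_BL2 x a y b) (⟨f, hf⟩ : FBL Ω)

lemma BL2_le {C : ℝ} (h : ∀ f ∈ FBL Ω, ∑ i, a i * f (x i) - ∑ j, b j * f (y j) ≤ C) :
    BL2 x a y b ≤ C :=
  ciSup_le fun f => h f f.2

lemma BL2_nonneg : 0 ≤ BL2 x a y b := by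
  simpa using le_BL2 x a y b zero_mem_FBL

lemma BL2_triangle {p : ℕ} (z : Fin p → Ω) (e : Fin p → ℝ) :
    BL2 x a z e ≤ BL2 x a y b + BL2 y b z e :=
  BL2_le _ _ _ _ fun _ hf => by linarith [le_BL2 x a y b hf, le_BL2 y b z e hf]

end BL2

def supAbsSum {k : ℕ} (z : Fin k → Ω) (N : Fin k → ℝ) : ℝ :=
  ⨆ f : FBL Ω, |∑ i, N i * (f : Ω → ℝ) (z i)|

section supAbsSum

variable {k : ℕ} (z : Fin k → Ω)

lemma bddAbove_range_supAbsSum (N : Fin k → ℝ) :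
    BddAbove (range fun f : FBL Ω => |∑ i, N i * (f : Ω → ℝ) (z i)|) :=
  ⟨(∑ i, |N i|) * Metric.diam (univ : Set Ω), by
    rintro _ ⟨f, rfl⟩
    exact abs_sum_mul_le_of_mem_FBL z N f.2⟩

lemma abs_sum_mul_le_supAbsSum (N : Fin k → ℝ) {f : Ω → ℝ} (hf : f ∈ FBL Ω) :
    |∑ i, N i * f (z i)| ≤ supAbsSum z N :=
  le_ciSup (bddAbove_range_supAbsSum z N) (⟨f, hf⟩ : FBL Ω)

lemma supAbsSum_le (N : Fin k → ℝ) {C : ℝ} (h : ∀ f ∈ FBL Ω, |∑ i, N i * f (z i)| ≤ C) :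
    supAbsSum z N ≤ C :=
  ciSup_le fun f => h f f.2

lemma supAbsSum_nonneg (N : Fin k → ℝ) : 0 ≤ supAbsSum z N :=
  (abs_nonneg _).trans (abs_sum_mul_le_supAbsSum z N zero_mem_FBL)

lemma supAbsSum_le_sum_abs_mul_diam (N : Fin k → ℝ) :
    supAbsSum z N ≤ (∑ i, |N i|) * Metric.diam (univ : Set Ω) :=
  supAbsSum_le z N fun _ hf => abs_sum_mul_le_of_mem_FBL z N hf

lemma supAbsSum_smul (c : ℝ) (N : Fin k → ℝ) : supAbsSum z (c • N) = |c| * supAbsSum z N := by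
  rw [supAbsSum, supAbsSum, Real.mul_iSup_of_nonneg (abs_nonneg c)]
  simp_rw [Pi.smul_apply, smul_eq_mul, mul_assoc, ← Finset.mul_sum, abs_mul]

lemma supAbsSum_neg (N : Fin k → ℝ) : supAbsSum z (-N) = supAbsSum z N := by
  simpa using supAbsSum_smul z (-1) N

lemma supAbsSum_le_add (N N' : Fin k → ℝ) :
    supAbsSum z N ≤ supAbsSum z N' + supAbsSum z (N - N') :=
  supAbsSum_le z N fun f hf => by
    have hsplit : ∑ i, N i * f (z i) = ∑ i, N' i * f (z i) + ∑ i, (N - N') i * f (z i) := by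
      rw [← Finset.sum_add_distrib]
      exact Finset.sum_congr rfl fun i _ => by simp only [Pi.sub_apply]; ring
    rw [hsplit]
    exact (abs_add_le _ _).trans (add_le_add (abs_sum_mul_le_supAbsSum z N' hf)
      (abs_sum_mul_le_supAbsSum z _ hf))

lemma continuous_supAbsSum : Continuous (supAbsSum z) := by
  refine (LipschitzWith.of_le_add_mul' (k * Metric.diam (univ : Set Ω)) fun N N' => ?_).continuous
  have hsum : ∑ i, |(N - N') i| ≤ k * dist N N' := by
    simpa [← Real.dist_eq] using Finset.sum_le_card_nsmul Finset.univ _ _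
      fun i _ => dist_le_pi_dist N N' i
  calc supAbsSum z N ≤ supAbsSum z N' + (∑ i, |(N - N') i|) * Metric.diam (univ : Set Ω) :=
        (supAbsSum_le_add z N N').trans
          (add_le_add_right (supAbsSum_le_sum_abs_mul_diam z _) _)
    _ ≤ supAbsSum z N' + k * Metric.diam (univ : Set Ω) * dist N N' := by
        nlinarith [Metric.diam_nonneg (s := (univ : Set Ω))]

lemma BL2_self_le_supAbsSum (a b : Fin k → ℝ) : BL2 z a z b ≤ supAbsSum z (a - b) :=
  BL2_le _ _ _ _ fun f hf => by
    rw [← Finset.sum_sub_distrib]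
    refine le_trans (le_of_eq (Finset.sum_congr rfl fun i _ => ?_)) ((le_abs_self _).trans
      (abs_sum_mul_le_supAbsSum z (a - b) hf))
    simp only [Pi.sub_apply]; ring

end supAbsSum

def cellMass {ι α : Type*} {K : ℕ} (P : ι → Set α) (y : Fin K → α) (c : Fin K → ℝ) (i : ι) : ℝ :=
  ∑ k, (P i).indicator (fun _ => c k) (y k)

section cellMass

variable {ι α : Type*} {P : ι → Set α} {K : ℕ}

lemma sum_cellMass_mul [Fintype ι] (hs : IndexedPartition P) (y : Fin K → α) (c : Fin K → ℝ)
    (g : ι → ℝ) :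
    ∑ i, cellMass P y c i * g i = ∑ k, c k * g (hs.index (y k)) := by
  classical
  simp_rw [cellMass, Finset.sum_mul]
  rw [Finset.sum_comm]
  refine Finset.sum_congr rfl fun k _ => ?_
  simp_rw [Set.indicator_apply, hs.mem_iff_index_eq, ite_mul, zero_mul, Finset.sum_ite_eq,
    Finset.mem_univ, if_true]

lemma cellMass_const (y : Fin K → α) (a : ℝ) (i : ι) :
    cellMass P y (fun _ => a) i = Nat.card {k // y k ∈ P i} * a := by
  classical
  simp only [cellMass, Set.indicator_apply]
  rw [Finset.sum_ite, Finset.sum_const_zero, add_zero, Finset.sum_const, nsmul_eq_mul,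
    Nat.card_eq_fintype_card, Fintype.card_subtype]

lemma probVec_cellMass {m : ℕ} {P : Fin m → Set α} (hs : IndexedPartition P) (y : Fin K → α)
    {c : Fin K → ℝ} (hc : probVec c) : probVec (cellMass P y c) := by
  refine ⟨fun i => Finset.sum_nonneg fun k _ => Set.indicator_nonneg (fun _ _ => hc.1 k) _, ?_⟩
  simpa [hc.2] using sum_cellMass_mul hs y c 1

end cellMass

section Quantization

variable {m : ℕ} {P : Fin m → Set Ω} (hs : IndexedPartition P) {ω : Fin m → Ω}

lemma dist_index_le_iSup_diam (hbdd : Bornology.IsBounded (univ : Set Ω)) (hω : ∀ i, ω i ∈ P i)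
    (z : Ω) : dist (ω (hs.index z)) z ≤ ⨆ i, Metric.diam (P i) :=
  (Metric.dist_le_diam_of_mem (hbdd.subset (subset_univ _)) (hω _) (hs.mem_index z)).trans
    (le_ciSup (f := fun i => Metric.diam (P i)) (finite_range _).bddAbove (hs.index z))

variable {D : ℝ}

lemma BL2_cellMass_le (hD : ∀ z, dist (ω (hs.index z)) z ≤ D) {K : ℕ} (y : Fin K → Ω)
    {c : Fin K → ℝ} (hc : ∀ k, 0 ≤ c k) :
    BL2 ω (cellMass P y c) y c ≤ (∑ k, c k) * D :=
  BL2_le _ _ _ _ fun _ hf => by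
    rw [sum_cellMass_mul hs]
    exact sum_mul_sub_sum_mul_le_of_mem_FBL hf hc fun k => hD (y k)

lemma BL2_le_cellMass (hD : ∀ z, dist (ω (hs.index z)) z ≤ D) {K : ℕ} (y : Fin K → Ω)
    {c : Fin K → ℝ} (hc : ∀ k, 0 ≤ c k) :
    BL2 y c ω (cellMass P y c) ≤ (∑ k, c k) * D :=
  BL2_le _ _ _ _ fun _ hf => by
    rw [sum_cellMass_mul hs]
    exact sum_mul_sub_sum_mul_le_of_mem_FBL hf hc fun k => (dist_comm _ _).trans_le (hD (y k))

theorem BL2_le_of_minimizes (hD : ∀ z, dist (ω (hs.index z)) z ≤ D) {K L : ℕ} (x : Fin K → Ω)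
    {a : Fin K → ℝ} (ha : probVec a) (y : Fin L → Ω) {c : Fin L → ℝ} (hc : probVec c)
    (μt : Fin m → ℝ)
    (hmin : ∀ ν, probVec ν → BL2 ω μt ω (cellMass P y c) ≤ BL2 ω μt ω ν) :
    BL2 x a y c ≤ 2 * D + 2 * supAbsSum ω (μt - cellMass P x a) := by
  set ν := cellMass P x a
  have hx : BL2 x a ω ν ≤ D := by simpa [ha.2] using BL2_le_cellMass hs hD x ha.1
  have hν : BL2 ω ν ω μt ≤ supAbsSum ω (μt - ν) := by
    simpa only [← supAbsSum_neg ω (μt - ν), neg_sub] using BL2_self_le_supAbsSum ω ν μt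
  have hμt : BL2 ω μt ω (cellMass P y c) ≤ supAbsSum ω (μt - ν) :=
    (hmin ν (probVec_cellMass hs x ha)).trans (BL2_self_le_supAbsSum ω μt ν)
  have hy : BL2 ω (cellMass P y c) y c ≤ D := by simpa [hc.2] using BL2_cellMass_le hs hD y hc.1
  linarith [BL2_triangle x a ω ν y c, BL2_triangle ω ν ω μt y c,
    BL2_triangle ω μt ω (cellMass P y c) y c]

end Quantization

section Gaussian

open scoped NNReal

lemma integrable_supAbsSum {k : ℕ} (z : Fin k → Ω) {μ : Fin k → Measure ℝ}
    [∀ i, IsProbabilityMeasure (μ i)] (hμ : ∀ i, Integrable id (μ i)) :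
    Integrable (supAbsSum z) (Measure.pi μ) := by
  refine Integrable.mono' (g := fun N => (∑ i, |N i|) * Metric.diam (univ : Set Ω))
    ((integrable_finsetSum _ fun i _ => (integrable_eval (hμ i)).abs).mul_const _)
    (continuous_supAbsSum z).aestronglyMeasurable (Filter.Eventually.of_forall fun N => ?_)
  rw [Real.norm_of_nonneg (supAbsSum_nonneg z N)]
  exact supAbsSum_le_sum_abs_mul_diam z N

lemma integrable_id_gaussianReal (μ : ℝ) (v : ℝ≥0) : Integrable id (gaussianReal μ v) :=
  memLp_one_iff_integrable.mp (memLp_id_gaussianReal 1)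

lemma pi_gaussianReal_eq_map_smul {ι : Type*} [Fintype ι] (σ : ℝ) :
    Measure.pi (fun _ : ι => gaussianReal 0 (σ ^ 2).toNNReal)
      = (Measure.pi fun _ : ι => gaussianReal 0 1).map (σ • ·) := by
  show _ = Measure.map (fun (x : ι → ℝ) i => σ * x i) _
  rw [Measure.pi_map_pi fun _ => (measurable_const_mul σ).aemeasurable]
  simp_rw [gaussianReal_map_const_mul, mul_zero, mul_one, Real.toNNReal_of_nonneg (sq_nonneg σ)]

lemma integral_supAbsSum_pi_gaussianReal {k : ℕ} (z : Fin k → Ω) {σ : ℝ} (hσ : 0 ≤ σ) :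
    ∫ N, supAbsSum z N ∂(Measure.pi fun _ => gaussianReal 0 (σ ^ 2).toNNReal)
      = σ * ∫ x, supAbsSum z x ∂(Measure.pi fun _ => gaussianReal 0 1) := by
  rw [pi_gaussianReal_eq_map_smul, integral_map (by fun_prop)
    (continuous_supAbsSum z).aestronglyMeasurable, ← integral_const_mul]
  simp_rw [supAbsSum_smul, abs_of_nonneg hσ]

lemma integral_supAbsSum_le_gaussComp {k : ℕ} (z : Fin k → Ω) :
    ∫ x, supAbsSum z x ∂(Measure.pi fun _ => gaussianReal 0 1) ≤ k * gaussComp Ω k (FBL Ω) := by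
  obtain rfl | hk := k.eq_zero_or_pos
  · simp [supAbsSum]
  have hint : ∀ z : Fin k → Ω, Integrable (supAbsSum z) (Measure.pi fun _ => gaussianReal 0 1) :=
    fun z => integrable_supAbsSum z fun _ => integrable_id_gaussianReal 0 1
  have hscale : ∀ (z : Fin k → Ω) (x : Fin k → ℝ),
      (⨆ f : FBL Ω, (1 / (k : ℝ)) * |∑ i, x i * (f : Ω → ℝ) (z i)|)
        = (1 / (k : ℝ)) * supAbsSum z x := fun z x =>
    (Real.mul_iSup_of_nonneg (by positivity) _).symm
  have hbdd : BddAbove (range fun z : Fin k → Ω => ∫ x,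
      (⨆ f : FBL Ω, (1 / (k : ℝ)) * |∑ i, x i * (f : Ω → ℝ) (z i)|)
        ∂(Measure.pi fun _ => gaussianReal 0 1)) := by
    refine ⟨∫ x : Fin k → ℝ, (1 / (k : ℝ)) * ((∑ i, |x i|) * Metric.diam (univ : Set Ω))
      ∂(Measure.pi fun _ => gaussianReal 0 1), ?_⟩
    rintro _ ⟨z, rfl⟩
    simp_rw [hscale z]
    refine integral_mono ((hint z).const_mul _)
      ((integrable_finsetSum Finset.univ fun i _ =>
        (integrable_eval (integrable_id_gaussianReal 0 1)).abs).mul_const _ |>.const_mul _)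
      fun x => mul_le_mul_of_nonneg_left (supAbsSum_le_sum_abs_mul_diam z x) (by positivity)
  have hz : 1 / (k : ℝ) * ∫ x, supAbsSum z x ∂(Measure.pi fun _ => gaussianReal 0 1)
      ≤ gaussComp Ω k (FBL Ω) := by
    have h := le_ciSup hbdd z
    simp only [hscale z, integral_const_mul] at h
    exact h
  calc ∫ x, supAbsSum z x ∂(Measure.pi fun _ => gaussianReal 0 1)
      = k * (1 / (k : ℝ) * ∫ x, supAbsSum z x ∂(Measure.pi fun _ => gaussianReal 0 1)) := by
        field_simp
    _ ≤ k * gaussComp Ω k (FBL Ω) := mul_le_mul_of_nonneg_left hz (Nat.cast_nonneg k)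

lemma integral_le_of_le_add_mul_supAbsSum {k : ℕ} (z : Fin k → Ω) {F : (Fin k → ℝ) → ℝ}
    (hF₀ : ∀ N, 0 ≤ F N) {A B σ : ℝ} (hB : 0 ≤ B) (hσ : 0 ≤ σ)
    (hF : ∀ N, F N ≤ A + B * supAbsSum z N) :
    ∫ N, F N ∂(Measure.pi fun _ => gaussianReal 0 (σ ^ 2).toNNReal)
      ≤ A + B * (σ * (k * gaussComp Ω k (FBL Ω))) := by
  have hint := integrable_supAbsSum z fun _ => integrable_id_gaussianReal 0 (σ ^ 2).toNNReal
  calc ∫ N, F N ∂(Measure.pi fun _ => gaussianReal 0 (σ ^ 2).toNNReal)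
      ≤ ∫ N, (A + B * supAbsSum z N) ∂(Measure.pi fun _ => gaussianReal 0 (σ ^ 2).toNNReal) :=
        integral_mono_of_nonneg (Filter.Eventually.of_forall hF₀)
          ((integrable_const A).add (hint.const_mul B)) (Filter.Eventually.of_forall hF)
    _ = A + B * (σ * ∫ x, supAbsSum z x ∂(Measure.pi fun _ => gaussianReal 0 1)) := by
        rw [integral_add (integrable_const A) (hint.const_mul B), integral_const,
          integral_const_mul, integral_supAbsSum_pi_gaussianReal z hσ, probReal_univ, one_smul]
    _ ≤ A + B * (σ * (k * gaussComp Ω k (FBL Ω))) := by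
        gcongr
        exact integral_supAbsSum_le_gaussComp z

lemma toNNReal_div_sq_eq_toNNReal_sq (a ε : ℝ) :
    (a / ε ^ 2).toNNReal = ((√a / ε) ^ 2).toNNReal := by
  rcases le_total 0 a with ha | ha
  · rw [div_pow, Real.sq_sqrt ha]
  · rw [Real.sqrt_eq_zero'.mpr ha, zero_div, zero_pow two_ne_zero,
      Real.toNNReal_of_nonpos (div_nonpos_of_nonpos_of_nonneg ha (sq_nonneg ε)), Real.toNNReal_zero]

end Gaussian

end PSMM

open PSMM

theorem psmm_gaussian_guarantee_general
    {Ω : Type*} [MetricSpace Ω] [MeasurableSpace Ω]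
    (hbdd : Bornology.IsBounded (Set.univ : Set Ω))
    {m n K : ℕ} (hn : 0 < n)
    (P : Fin m → Set Ω) (hdisj : Pairwise (Function.onFun Disjoint P))
    (hcover : ⋃ i, P i = Set.univ)
    (ω : Fin m → Ω) (hω : ∀ i, ω i ∈ P i)
    (S : Fin n → Ω)
    (ε δ : ℝ) (hε : 0 < ε)
    (μt : (Fin m → ℝ) → Fin m → ℝ)
    (hμt : ∀ N : Fin m → ℝ, ∀ i,
      μt N i = ((Nat.card {j : Fin n // S j ∈ P i} : ℝ) + N i) / n)
    (μh : (Fin m → ℝ) → Fin m → ℝ)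
    (hμh : ∀ N, probVec (μh N) ∧
      ∀ ν : Fin m → ℝ, probVec ν → BL2 ω (μt N) ω (μh N) ≤ BL2 ω (μt N) ω ν)
    (y : (Fin m → ℝ) → Fin K → Ω) (c : (Fin m → ℝ) → Fin K → ℝ)
    (hc : ∀ N, probVec (c N))
    (hmatch : ∀ N i, ∑ j, (P i).indicator (fun _ => c N j) (y N j) = μh N i) :
    ∫ N : Fin m → ℝ, BL2 S (fun _ => (n : ℝ)⁻¹) (y N) (c N)
        ∂(Measure.pi fun _ : Fin m => gaussianReal 0 (Real.log (1 / δ) / ε ^ 2).toNNReal)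
      ≤ 2 * ((⨆ i, Metric.diam (P i))
          + (m * Real.sqrt (Real.log (1 / δ)) / (n * ε)) * gaussComp Ω m (FBL Ω)) := by
  let hs := IndexedPartition.mk' P hdisj (fun i => ⟨ω i, hω i⟩) (iUnion_eq_univ_iff.mp hcover)
  have hS : probVec fun _ : Fin n => (n : ℝ)⁻¹ := ⟨fun _ => by positivity, by simp [hn.ne']⟩
  have hnoise : ∀ N, μt N - cellMass P S (fun _ => (n : ℝ)⁻¹) = (n : ℝ)⁻¹ • N := fun N => by
    ext i
    simp only [Pi.sub_apply, Pi.smul_apply, smul_eq_mul, hμt, cellMass_const]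
    ring
  have hpointwise : ∀ N, BL2 S (fun _ => (n : ℝ)⁻¹) (y N) (c N)
      ≤ 2 * (⨆ i, Metric.diam (P i)) + 2 * (n : ℝ)⁻¹ * supAbsSum ω N := fun N => by
    have hmin : ∀ ν, probVec ν → BL2 ω (μt N) ω (cellMass P (y N) (c N)) ≤ BL2 ω (μt N) ω ν := by
      rw [show cellMass P (y N) (c N) = μh N from funext (hmatch N)]
      exact (hμh N).2
    have h := BL2_le_of_minimizes hs (dist_index_le_iSup_diam hs hbdd hω) S hS (y N) (hc N)
      (μt N) hmin
    rwa [hnoise, supAbsSum_smul, abs_of_nonneg (by positivity), ← mul_assoc] at h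
  rw [toNNReal_div_sq_eq_toNNReal_sq]
  refine (integral_le_of_le_add_mul_supAbsSum ω (fun N => BL2_nonneg _ _ _ _) (by positivity)
    (div_nonneg (Real.sqrt_nonneg _) hε.le) hpointwise).trans_eq ?_
  field_simp

/-- Utility guarantee of the Private Signed Measure Mechanism with Gaussian noise. -/
theorem psmm_gaussian_guarantee
    {Ω : Type*} [MetricSpace Ω] [MeasurableSpace Ω]
    (hbdd : Bornology.IsBounded (Set.univ : Set Ω))
    {m n K : ℕ} (hm : 0 < m) (hn : 0 < n)
    (P : Fin m → Set Ω) (hdisj : Pairwise (Function.onFun Disjoint P))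
    (hcover : ⋃ i, P i = Set.univ)
    (ω : Fin m → Ω) (hω : ∀ i, ω i ∈ P i)
    (S : Fin n → Ω)
    (ε δ : ℝ) (hε : 0 < ε) (hδ : δ ∈ Set.Ioo (0 : ℝ) 1)
    (μt : (Fin m → ℝ) → Fin m → ℝ)
    (hμt : ∀ N : Fin m → ℝ, ∀ i,
      μt N i = ((Nat.card {j : Fin n // S j ∈ P i} : ℝ) + N i) / n)
    (μh : (Fin m → ℝ) → Fin m → ℝ) (hμhMeas : Measurable μh)
    (hμh : ∀ N, probVec (μh N) ∧
      ∀ ν : Fin m → ℝ, probVec ν → BL2 ω (μt N) ω (μh N) ≤ BL2 ω (μt N) ω ν)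
    (y : (Fin m → ℝ) → Fin K → Ω) (c : (Fin m → ℝ) → Fin K → ℝ)
    (hyMeas : Measurable y) (hcMeas : Measurable c)
    (hc : ∀ N, probVec (c N))
    (hmatch : ∀ N i, ∑ j, (P i).indicator (fun _ => c N j) (y N j) = μh N i) :
    ∫ N : Fin m → ℝ, BL2 S (fun _ => (n : ℝ)⁻¹) (y N) (c N)
        ∂(Measure.pi fun _ : Fin m => gaussianReal 0 (Real.log (1 / δ) / ε ^ 2).toNNReal)
      ≤ 2 * ((⨆ i, Metric.diam (P i))
          + (m * Real.sqrt (Real.log (1 / δ)) / (n * ε)) * gaussComp Ω m (FBL Ω)) :=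
  psmm_gaussian_guarantee_general hbdd hn P hdisj hcover ω hω S ε δ hε μt hμt μh hμh y c hc hmatch
end
end
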